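/- arXiv:2404.05306 — 2 statements merged into one kernel-verified Lean document; each statement's English description precedes it below -/
import Mathlib

section
/- Let G = ([n], E) be a DAG, let i ≠ j be vertices and K ⊆ [n] ∖ {i,j} a set such that K does not d-separate i from j in G. Let a ≠ b ∈ [n] and C ⊆ [n] ∖ {a,b}. Suppose there exists a natural number N such that (∏_{S ⊆ [n]} det S_{S,S})^N · det S_{{a}∪C,{b}∪C} lies in the ideal of R generated by det S_{{i}∪K,{j}∪K}, where the product ranges over all subsets S of [n]. Then for every (Λ,Ω) in the parameter space of G with det (φ_G(Λ,Ω))_{{i}∪K,{j}∪K} = 0, one has det (φ_G(Λ,Ω))_{{a}∪C,{b}∪C} = 0; that is, a ⊥⊥_Σ b | C holds for every Σ ∈ M_{G, i⊥⊥j|K}. -/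
open Matrix MvPolynomial

namespace CI

/-- A directed acyclic graph on vertex set `Fin n`. -/
structure DAG (n : ℕ) where
  E : Finset (Fin n × Fin n)
  acyclic : ∀ v : Fin n, ¬ Relation.TransGen (fun a b => (a, b) ∈ E) v v

variable {n : ℕ}

/-- `d` is a descendant of `v` (every vertex is a descendant of itself). -/
def DAG.desc (G : DAG n) (v d : Fin n) : Prop :=
  Relation.ReflTransGen (fun a b => (a, b) ∈ G.E) v d

/-- An (undirected) path in a DAG from `i` to `j`, encoded by its length and a
vertex function which is constant past the end of the path. -/
structure GPath (G : DAG n) (i j : Fin n) where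
  len : ℕ
  v : ℕ → Fin n
  start_eq : v 0 = i
  end_eq : v len = j
  inj : ∀ s t : ℕ, s ≤ len → t ≤ len → v s = v t → s = t
  adj : ∀ t : ℕ, t < len → (v t, v (t + 1)) ∈ G.E ∨ (v (t + 1), v t) ∈ G.E
  stable : ∀ t : ℕ, len ≤ t → v t = v len

namespace GPath

variable {G : DAG n} {i j : Fin n}

/-- The interior vertex at position `t` is a collider on the path. -/
def IsCollider (p : GPath G i j) (t : ℕ) : Prop :=
  0 < t ∧ t < p.len ∧ (p.v (t - 1), p.v t) ∈ G.E ∧ (p.v (t + 1), p.v t) ∈ G.E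

/-- `x` lies on the path `p`. -/
def onPath (p : GPath G i j) (x : Fin n) : Prop := ∃ t ≤ p.len, p.v t = x

/-- The path `p` is d-connecting given `K`. -/
def DConn (p : GPath G i j) (K : Finset (Fin n)) : Prop :=
  (∀ t : ℕ, 0 < t → t < p.len → ¬ p.IsCollider t → p.v t ∉ K) ∧
  (∀ t : ℕ, p.IsCollider t → ∃ d ∈ K, G.desc (p.v t) d)

end GPath

/-- `K` d-separates `i` and `j` in `G`. -/
def DAG.dSep (G : DAG n) (i j : Fin n) (K : Finset (Fin n)) : Prop :=
  ∀ p : GPath G i j, ¬ p.DConn K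

/-- `C` d-separates the sets `A` and `B` in `G`. -/
def DAG.dSepSets (G : DAG n) (A B C : Finset (Fin n)) : Prop :=
  ∀ a ∈ A, ∀ b ∈ B, ∀ p : GPath G a b, ¬ p.DConn C

/-- The parameterization `φ_G(Λ, Ω) = (I - Λ)^{-T} Ω (I - Λ)^{-1}`. -/
noncomputable def phi (Λ : Matrix (Fin n) (Fin n) ℝ) (ω : Fin n → ℝ) :
    Matrix (Fin n) (Fin n) ℝ :=
  ((1 - Λ)⁻¹)ᵀ * Matrix.diagonal ω * (1 - Λ)⁻¹

/-- `(Λ, ω)` is a valid parameter for the DAG `G`. -/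
def IsParam (G : DAG n) (Λ : Matrix (Fin n) (Fin n) ℝ) (ω : Fin n → ℝ) : Prop :=
  (∀ a b : Fin n, (a, b) ∉ G.E → Λ a b = 0) ∧ ∀ a : Fin n, 0 < ω a

/-- The Gaussian DAG model `M_G`: the image of `φ_G` over the parameter space. -/
def gaussianModel (G : DAG n) : Set (Matrix (Fin n) (Fin n) ℝ) :=
  { M | ∃ Λ ω, IsParam G Λ ω ∧ M = phi Λ ω }

/-- The determinant of the submatrix of `M` with rows `A` and columns `B`
(in the increasing order of indices); junk value `0` if `A` and `B` have
different cardinality. -/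
noncomputable def subDet {α : Type} [CommRing α] (M : Matrix (Fin n) (Fin n) α)
    (A B : Finset (Fin n)) : α :=
  if h : B.card = A.card then
    Matrix.det (Matrix.of fun p q : Fin A.card =>
      M ((A.orderIsoOfFin rfl p).1) ((B.orderIsoOfFin h q).1))
  else 0

/-- The model `M_{G, i ⊥⊥ j | K}`. -/
noncomputable def modelCI (G : DAG n) (i j : Fin n) (K : Finset (Fin n)) :
    Set (Matrix (Fin n) (Fin n) ℝ) :=
  { M | M ∈ gaussianModel G ∧ subDet M (insert i K) (insert j K) = 0 }

/-- The polynomial ring `R` in the variables `λ_{ab}` ((a,b) ∈ E) and `ω_a`. -/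
abbrev PolyR (n : ℕ) := MvPolynomial (Fin n × Fin n ⊕ Fin n) ℝ

/-- The matrix `L` of indeterminates `λ_{ab}` for edges `(a,b) ∈ E`. -/
noncomputable def Lmat (G : DAG n) : Matrix (Fin n) (Fin n) (PolyR n) :=
  Matrix.of fun a b => if (a, b) ∈ G.E then X (Sum.inl (a, b)) else 0

/-- The matrix of polynomials `S = (I - L)^{-T} W (I - L)^{-1}`. -/
noncomputable def Smat (G : DAG n) : Matrix (Fin n) (Fin n) (PolyR n) :=
  ((1 - Lmat G)⁻¹)ᵀ * Matrix.diagonal (fun a => X (Sum.inr a)) * (1 - Lmat G)⁻¹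

/-- Evaluation of a polynomial in `R` at a parameter point `(Λ, ω)`. -/
noncomputable def evalParam (Λ : Matrix (Fin n) (Fin n) ℝ) (ω : Fin n → ℝ) :
    PolyR n →+* ℝ :=
  MvPolynomial.eval (Sum.elim (fun e : Fin n × Fin n => Λ e.1 e.2) ω)

/-- `p` is a monomial: a nonzero scalar multiple of a single power product. -/
def IsMonomial (p : PolyR n) : Prop := p.support.card = 1

/-- A directed path in a DAG from `s` to `t`, encoded as for `GPath`. -/
structure DiPath (G : DAG n) (s t : Fin n) where
  len : ℕ
  v : ℕ → Fin n
  start_eq : v 0 = s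
  end_eq : v len = t
  inj : ∀ a b : ℕ, a ≤ len → b ≤ len → v a = v b → a = b
  adj : ∀ a : ℕ, a < len → (v a, v (a + 1)) ∈ G.E
  stable : ∀ a : ℕ, len ≤ a → v a = v len

namespace DiPath

variable {G : DAG n} {s t : Fin n}

/-- `x` lies on the directed path `p`. -/
def onPath (p : DiPath G s t) (x : Fin n) : Prop := ∃ a ≤ p.len, p.v a = x

/-- The directed path `p` traverses the edge `e`. -/
def hasEdge (p : DiPath G s t) (e : Fin n × Fin n) : Prop :=
  ∃ a < p.len, p.v a = e.1 ∧ p.v (a + 1) = e.2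

end DiPath

/-- A trek: a pair of directed paths with a common top vertex. -/
structure Trek (G : DAG n) where
  top : Fin n
  left : Fin n
  right : Fin n
  L : DiPath G top left
  R : DiPath G top right

/-- The trek `trk` traverses the edge `e` (on its left or right part). -/
def Trek.hasEdge {G : DAG n} (trk : Trek G) (e : Fin n × Fin n) : Prop :=
  trk.L.hasEdge e ∨ trk.R.hasEdge e

/-- A trek system from `A` to `B`: a set of treks whose left endpoints exhaust `A`
and whose right endpoints exhaust `B`. -/
def IsTrekSystem (G : DAG n) (A B : Finset (Fin n)) (T : Set (Trek G)) : Prop :=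
  Set.BijOn (fun trk => trk.left) T ↑A ∧ Set.BijOn (fun trk => trk.right) T ↑B

/-- The trek system `T` has no sided intersection. -/
def NoSidedIntersection {G : DAG n} (T : Set (Trek G)) : Prop :=
  (∀ t₁ ∈ T, ∀ t₂ ∈ T, t₁ ≠ t₂ → ∀ x : Fin n, t₁.L.onPath x → ¬ t₂.L.onPath x) ∧
  (∀ t₁ ∈ T, ∀ t₂ ∈ T, t₁ ≠ t₂ → ∀ x : Fin n, t₁.R.onPath x → ¬ t₂.R.onPath x)

/-- The product of the edge variables traversed by a directed path. -/
noncomputable def diMon {G : DAG n} {s t : Fin n} (p : DiPath G s t) : PolyR n :=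
  ∏ a ∈ Finset.range p.len, X (Sum.inl (p.v a, p.v (a + 1)))

/-- The trek monomial `m_T = ω_s ∏ λ_{kl}`. -/
noncomputable def trekMon {G : DAG n} (trk : Trek G) : PolyR n :=
  X (Sum.inr trk.top) * diMon trk.L * diMon trk.R

/-- The trek system monomial: product of the trek monomials of its treks. -/
noncomputable def trekSysMon {G : DAG n} (T : Set (Trek G)) : PolyR n :=
  ∏ᶠ trk ∈ T, trekMon trk

/-- Partial covariance `σ_{x,a·B}`. -/
noncomputable def pCov (M : Matrix (Fin n) (Fin n) ℝ) (x a : Fin n)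
    (B : Finset (Fin n)) : ℝ :=
  M x a - ∑ p : {b : Fin n // b ∈ B}, ∑ q : {b : Fin n // b ∈ B},
      M x p.1 *
        (M.submatrix (fun b : {b : Fin n // b ∈ B} => b.1)
          (fun b : {b : Fin n // b ∈ B} => b.1))⁻¹ p q *
      M q.1 a

/-- Partial correlation `ρ_{x,a·B}`. -/
noncomputable def pCor (M : Matrix (Fin n) (Fin n) ℝ) (x a : Fin n)
    (B : Finset (Fin n)) : ℝ :=
  pCov M x a B / Real.sqrt (pCov M x x B * pCov M a a B)

/-- The DAG obtained by deleting the edge `(a, b)`. -/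
def DAG.deleteEdge (G : DAG n) (a b : Fin n) : DAG n where
  E := G.E.erase (a, b)
  acyclic := fun v hv =>
    G.acyclic v (Relation.TransGen.mono (fun _ _ hxy => Finset.mem_of_mem_erase hxy) _ _ hv)

/-- The Gaussian CI statement `A ⊥⊥_Σ B | C`: all `(|C|+1) × (|C|+1)` minors of
the submatrix with rows `A ∪ C` and columns `B ∪ C` vanish. -/
noncomputable def ciHolds (M : Matrix (Fin n) (Fin n) ℝ)
    (A B C : Finset (Fin n)) : Prop :=
  ∀ A' B' : Finset (Fin n), A' ⊆ A ∪ C → B' ⊆ B ∪ C →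
    A'.card = C.card + 1 → B'.card = C.card + 1 → subDet M A' B' = 0

/-- A set of CI statements over `[4]` is gaussoid-closed. -/
def GaussoidClosed (𝒢 : Fin 4 → Fin 4 → Finset (Fin 4) → Prop) : Prop :=
  (∀ a b C, 𝒢 a b C → 𝒢 b a C) ∧
  ∀ i j k : Fin 4, ∀ L : Finset (Fin 4),
    i ≠ j → i ≠ k → j ≠ k → i ∉ L → j ∉ L → k ∉ L →
      ((𝒢 i j L → 𝒢 i k (insert j L) → 𝒢 i k L ∧ 𝒢 i j (insert k L)) ∧
       (𝒢 i j (insert k L) → 𝒢 i k (insert j L) → 𝒢 i j L ∧ 𝒢 i k L) ∧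
       (𝒢 i j L → 𝒢 i k L → 𝒢 i j (insert k L) ∧ 𝒢 i k (insert j L)) ∧
       (𝒢 i j L → 𝒢 i j (insert k L) → 𝒢 i k L ∨ 𝒢 j k L))

end CI

section Aux

open CI

variable {n : ℕ}

/-- The number of descendants of a vertex. -/
noncomputable def htG (G : DAG n) (v : Fin n) : ℕ := {d | G.desc v d}.ncard

lemma htG_pos (G : DAG n) (v : Fin n) : 0 < htG G v := by
  rw [htG, Set.ncard_pos (Set.toFinite _)]
  exact ⟨v, Relation.ReflTransGen.refl⟩

lemma htG_le (G : DAG n) (v : Fin n) : htG G v ≤ n := by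
  have := Set.ncard_le_ncard (Set.subset_univ {d | G.desc v d}) (Set.toFinite _)
  simpa [htG, Set.ncard_univ] using this

lemma htG_lt_of_edge {G : DAG n} {a b : Fin n} (h : (a, b) ∈ G.E) :
    htG G b < htG G a := by
  apply Set.ncard_lt_ncard _ (Set.toFinite _)
  constructor
  · intro d hd
    exact Relation.ReflTransGen.head h hd
  · intro hsub
    have ha : a ∈ {d | G.desc a d} := Relation.ReflTransGen.refl
    have hba : G.desc b a := hsub ha
    exact G.acyclic a (Relation.TransGen.head' h hba)

lemma pow_support {α : Type*} [CommRing α] {G : DAG n}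
    {M : Matrix (Fin n) (Fin n) α} (hM : ∀ a b, (a, b) ∉ G.E → M a b = 0) :
    ∀ k : ℕ, ∀ x y : Fin n, (M ^ k) x y ≠ 0 → htG G y + k ≤ htG G x := by
  intro k
  induction k with
  | zero =>
    intro x y h
    rw [pow_zero] at h
    have : x = y := by
      by_contra hxy
      exact h (Matrix.one_apply_ne hxy)
    simp [this]
  | succ k ih =>
    intro x y h
    rw [pow_succ, Matrix.mul_apply] at h
    obtain ⟨l, -, hl⟩ := Finset.exists_ne_zero_of_sum_ne_zero h
    have h1 : (M ^ k) x l ≠ 0 := fun h' => hl (by rw [h', zero_mul])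
    have h2 : M l y ≠ 0 := fun h' => hl (by rw [h', mul_zero])
    have hE : (l, y) ∈ G.E := by by_contra hc; exact h2 (hM _ _ hc)
    have := ih x l h1
    have := htG_lt_of_edge hE
    omega

lemma matPow_eq_zero {α : Type*} [CommRing α] {G : DAG n}
    {M : Matrix (Fin n) (Fin n) α} (hM : ∀ a b, (a, b) ∉ G.E → M a b = 0) :
    M ^ n = 0 := by
  ext x y
  by_contra h
  have h1 := pow_support hM n x y h
  have h2 := htG_le G x
  have h3 := htG_pos G y
  omega

lemma isUnit_one_sub {α : Type*} [CommRing α] {G : DAG n}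
    {M : Matrix (Fin n) (Fin n) α} (hM : ∀ a b, (a, b) ∉ G.E → M a b = 0) :
    IsUnit ((1 - M) : Matrix (Fin n) (Fin n) α) :=
  IsNilpotent.isUnit_one_sub ⟨n, matPow_eq_zero hM⟩

lemma one_sub_mul_inv {α : Type*} [CommRing α] {G : DAG n}
    {M : Matrix (Fin n) (Fin n) α} (hM : ∀ a b, (a, b) ∉ G.E → M a b = 0) :
    (1 - M) * (1 - M)⁻¹ = 1 :=
  Matrix.mul_nonsing_inv _ ((Matrix.isUnit_iff_isUnit_det _).mp (isUnit_one_sub hM))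

lemma map_one_sub_inv {α β : Type*} [CommRing α] [CommRing β] (f : α →+* β)
    {G : DAG n} {M : Matrix (Fin n) (Fin n) α}
    (hM : ∀ a b, (a, b) ∉ G.E → M a b = 0) :
    (1 - M.map f)⁻¹ = ((1 - M)⁻¹).map f := by
  have hMf : ∀ a b, (a, b) ∉ G.E → (M.map f) a b = 0 := fun a b hab => by
    simp [Matrix.map_apply, hM a b hab]
  apply Matrix.inv_eq_right_inv
  have h1 : (1 - M.map f) = (1 - M).map f := by
    rw [Matrix.map_sub f (by simp) , Matrix.map_one f (map_zero f) (map_one f)]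
  rw [h1, ← Matrix.map_mul, one_sub_mul_inv hM, Matrix.map_one f (map_zero f) (map_one f)]

lemma lmat_support (G : DAG n) : ∀ a b, (a, b) ∉ G.E → (Lmat G) a b = 0 := by
  intro a b h
  simp [Lmat, h]

lemma lmat_map {G : DAG n} {Λ : Matrix (Fin n) (Fin n) ℝ} {ω : Fin n → ℝ}
    (hp : IsParam G Λ ω) : (Lmat G).map (evalParam Λ ω) = Λ := by
  ext a b
  by_cases h : (a, b) ∈ G.E
  · simp [Lmat, h, evalParam]
  · simp [Lmat, h, (hp.1 a b h).symm]

lemma smat_map {G : DAG n} {Λ : Matrix (Fin n) (Fin n) ℝ} {ω : Fin n → ℝ}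
    (hp : IsParam G Λ ω) : (Smat G).map (evalParam Λ ω) = phi Λ ω := by
  have hinv : ((1 - Lmat G)⁻¹).map (evalParam Λ ω) = (1 - Λ)⁻¹ := by
    rw [← map_one_sub_inv (evalParam Λ ω) (lmat_support G), lmat_map hp]
  have hdiag : (Matrix.diagonal (fun a : Fin n => (X (Sum.inr a) : PolyR n))).map
      (evalParam Λ ω) = Matrix.diagonal ω := by
    rw [Matrix.diagonal_map (map_zero _)]
    congr 1 <;> first
      | rfl
      | (ext a; simp [evalParam])
  rw [Smat, phi, Matrix.map_mul, Matrix.map_mul, hdiag, hinv, Matrix.transpose_map, hinv]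

lemma subDet_map {α β : Type} [CommRing α] [CommRing β] (f : α →+* β)
    (M : Matrix (Fin n) (Fin n) α) (A B : Finset (Fin n)) :
    subDet (M.map f) A B = f (subDet M A B) := by
  unfold subDet
  split_ifs with h
  · rw [RingHom.map_det]
    rfl
  · simp

lemma posDef_phi {G : DAG n} {Λ : Matrix (Fin n) (Fin n) ℝ} {ω : Fin n → ℝ}
    (hp : IsParam G Λ ω) : (phi Λ ω).PosDef := by
  have hsupp : ∀ a b, (a, b) ∉ G.E → Λ a b = 0 := hp.1
  rw [Matrix.posDef_iff_dotProduct_mulVec]; constructor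
  · rw [Matrix.IsHermitian, Matrix.conjTranspose_eq_transpose_of_trivial]
    simp only [phi, Matrix.transpose_mul, Matrix.transpose_transpose,
      Matrix.diagonal_transpose, Matrix.mul_assoc]
  · intro x hx
    set B := ((1 : Matrix (Fin n) (Fin n) ℝ) - Λ)⁻¹ with hB
    have hBx : B *ᵥ x ≠ 0 := by
      intro h0
      apply hx
      have : (1 - Λ) *ᵥ (B *ᵥ x) = x := by
        rw [Matrix.mulVec_mulVec, one_sub_mul_inv hsupp, Matrix.one_mulVec]
      rw [h0, Matrix.mulVec_zero] at this
      exact this.symm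
    have hdotp : star x ⬝ᵥ (phi Λ ω *ᵥ x) =
        star (B *ᵥ x) ⬝ᵥ (Matrix.diagonal ω *ᵥ (B *ᵥ x)) := by
      simp only [star_trivial]
      rw [phi, ← Matrix.mulVec_mulVec, ← Matrix.mulVec_mulVec,
        Matrix.dotProduct_mulVec, Matrix.vecMul_transpose]
    rw [hdotp]
    exact (Matrix.PosDef.diagonal hp.2).dotProduct_mulVec_pos hBx

lemma posDef_submatrix {m : Type*} [Fintype m] [DecidableEq m]
    {M : Matrix (Fin n) (Fin n) ℝ} (hM : M.PosDef) {e : m → Fin n}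
    (he : Function.Injective e) : (M.submatrix e e).PosDef := by
  rw [Matrix.posDef_iff_dotProduct_mulVec]; constructor
  · exact hM.1.submatrix e
  · intro x hx
    classical
    set y : Fin n → ℝ := Function.extend e x 0 with hy
    have hyy : ∀ p, y (e p) = x p := fun p => he.extend_apply x 0 p
    have hy0 : ∀ i, i ∉ Set.range e → y i = 0 := by
      intro i hi
      rw [hy, Function.extend_apply' _ _ _ (by simpa [Set.range] using hi)]
      rfl
    have key : ∀ f : Fin n → ℝ, (∀ i, i ∉ Set.range e → f i = 0) →
        ∑ i, f i = ∑ p, f (e p) := by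
      intro f hf
      rw [← Finset.sum_image (fun p _ q _ h => he h)]
      symm
      apply Finset.sum_subset (Finset.subset_univ _)
      intro i _ hi
      apply hf
      intro ⟨p, hp⟩
      exact hi (Finset.mem_image.mpr ⟨p, Finset.mem_univ p, hp⟩)
    have hyne : y ≠ 0 := by
      obtain ⟨p, hp⟩ := Function.ne_iff.mp hx
      intro h0
      apply hp
      have := congrFun h0 (e p)
      rwa [hyy] at this
    have hval : star x ⬝ᵥ (M.submatrix e e *ᵥ x) = star y ⬝ᵥ (M *ᵥ y) := by
      rw [star_trivial, star_trivial]
      have h1 : y ⬝ᵥ (M *ᵥ y) = ∑ i, y i * ∑ j, M i j * y j := rfl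
      have h2 : x ⬝ᵥ (M.submatrix e e *ᵥ x) =
          ∑ p, x p * ∑ q, M (e p) (e q) * x q := rfl
      rw [h1, h2, key (fun i => y i * ∑ j, M i j * y j) (fun i hi => by show y i * _ = 0; rw [hy0 i hi, zero_mul])]
      refine Finset.sum_congr rfl fun p _ => ?_
      rw [hyy, key (fun j => M (e p) j * y j) (fun j hj => by show M (e p) j * y j = 0; rw [hy0 j hj, mul_zero])]
      exact congrArg _ (Finset.sum_congr rfl fun q _ => by rw [hyy])
    rw [hval]
    exact hM.dotProduct_mulVec_pos hyne

lemma subDet_pos {M : Matrix (Fin n) (Fin n) ℝ} (hM : M.PosDef)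
    (A : Finset (Fin n)) : 0 < subDet M A A := by
  rw [subDet, dif_pos rfl]
  have he : Function.Injective
      (fun p : Fin A.card => ((A.orderIsoOfFin rfl p : {x // x ∈ A}) : Fin n)) :=
    fun p q h => (A.orderIsoOfFin rfl).injective (Subtype.ext h)
  exact (posDef_submatrix hM he).det_pos

end Aux

open CI in
/-- saturation-based sufficient condition for CI implication. -/
theorem statement1 {n : ℕ} (G : DAG n) (i j : Fin n) (hij : i ≠ j)
    (K : Finset (Fin n)) (hiK : i ∉ K) (hjK : j ∉ K) (hnd : ¬ G.dSep i j K)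
    (a b : Fin n) (hab : a ≠ b) (C : Finset (Fin n)) (haC : a ∉ C) (hbC : b ∉ C)
    (hmem : ∃ N : ℕ,
      (∏ A ∈ (Finset.univ : Finset (Fin n)).powerset, subDet (Smat G) A A) ^ N *
          subDet (Smat G) (insert a C) (insert b C) ∈
        Ideal.span {subDet (Smat G) (insert i K) (insert j K)}) :
    (∀ (Λ : Matrix (Fin n) (Fin n) ℝ) (ω : Fin n → ℝ), IsParam G Λ ω →
        subDet (phi Λ ω) (insert i K) (insert j K) = 0 →
        subDet (phi Λ ω) (insert a C) (insert b C) = 0) ∧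
      ∀ M ∈ modelCI G i j K, subDet M (insert a C) (insert b C) = 0 := by
  obtain ⟨N, hmem⟩ := hmem
  obtain ⟨c, hc⟩ := Ideal.mem_span_singleton'.mp hmem
  have main : ∀ (Λ : Matrix (Fin n) (Fin n) ℝ) (ω : Fin n → ℝ), IsParam G Λ ω →
      subDet (phi Λ ω) (insert i K) (insert j K) = 0 →
      subDet (phi Λ ω) (insert a C) (insert b C) = 0 := by
    intro Λ ω hp h0
    have hsub : ∀ A B : Finset (Fin n),
        evalParam Λ ω (subDet (Smat G) A B) = subDet (phi Λ ω) A B := by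
      intro A B
      rw [← subDet_map (evalParam Λ ω), smat_map hp]
    have hev := congrArg (evalParam Λ ω) hc
    simp only [_root_.map_mul, map_pow, map_prod, hsub] at hev
    rw [h0, mul_zero] at hev
    have hprodpos : 0 < ∏ A ∈ (Finset.univ : Finset (Fin n)).powerset,
        subDet (phi Λ ω) A A :=
      Finset.prod_pos fun A _ => subDet_pos (posDef_phi hp) A
    have hpowne : (∏ A ∈ (Finset.univ : Finset (Fin n)).powerset,
        subDet (phi Λ ω) A A) ^ N ≠ 0 := pow_ne_zero N (ne_of_gt hprodpos)
    rcases mul_eq_zero.mp hev.symm with h | h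
    · exact absurd h hpowne
    · exact h
  refine ⟨main, ?_⟩
  rintro M ⟨⟨Λ, ω, hp, rfl⟩, h0⟩
  exact main Λ ω hp h0
end

section
/- Let Σ be an n×n real positive definite matrix, let x, a, c ∈ [n] be distinct indices and B ⊆ [n] ∖ {x,a,c}. If the partial covariance σ_{x,c·({a}∪B)} = 0, then ρ_{x,c·B} = ρ_{x,a·B} · ρ_{a,c·B}, and consequently |ρ_{x,c·B}| ≤ |ρ_{x,a·B}|. -/
open Matrix MvPolynomial

/-!
Write `σ` for `pCov M`. For `x ∉ B`, the residual of `X_x` after regression on `X_B` has a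
coefficient vector `r` with `r x = 1`, support in `{x} ∪ B` and `r ᵥ* M` vanishing on `B`;
positive definiteness makes it unique, and `σ_{x,c·B} = (r ᵥ* M) c`. If `s` is the residual
vector of `a`, then `r - (σ_{x,a·B} / σ_{a,a·B}) • s` satisfies the conditions for `{a} ∪ B`,
which gives the recursion `σ_{x,c·aB} = σ_{x,c·B} - σ_{x,a·B} σ_{a,c·B} / σ_{a,a·B}`.
Under the hypothesis it is the factorization of `ρ_{x,c·B}`; for `x = c`, positivity of
`σ_{c,c·aB}` gives `|ρ_{a,c·B}| < 1`.
-/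

lemma Matrix.PosDef.eq_zero_of_vecMul_eq_zero_on {ι : Type*} [Fintype ι]
    {M : Matrix ι ι ℝ} (hM : M.PosDef) {s : Set ι} {v : ι → ℝ}
    (hv : ∀ j ∉ s, v j = 0) (hvM : ∀ j ∈ s, (v ᵥ* M) j = 0) : v = 0 := by
  by_contra hne
  have hpos := hM.dotProduct_mulVec_pos hne
  rw [star_trivial, dotProduct_mulVec] at hpos
  refine hpos.ne' (Finset.sum_eq_zero fun j _ => ?_)
  by_cases hj : j ∈ s
  · rw [hvM j hj, zero_mul]
  · rw [hv j hj, mul_zero]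

namespace CI

variable {n : ℕ} {M : Matrix (Fin n) (Fin n) ℝ} {B : Finset (Fin n)} {x a c : Fin n}

lemma pCov_eq_sub_dotProduct (M : Matrix (Fin n) (Fin n) ℝ) (x c : Fin n) (B : Finset (Fin n)) :
    pCov M x c B =
      M x c - ((fun q : B => M x q) ᵥ* (M.submatrix Subtype.val Subtype.val)⁻¹) ⬝ᵥ
        fun q : B => M q c := by
  simp only [pCov, dotProduct, vecMul, Finset.sum_mul]
  rw [Finset.sum_comm]

lemma pCov_eq_zero_of_mem (hB : IsUnit (M.submatrix (Subtype.val : B → Fin n) Subtype.val).det)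
    (x : Fin n) {b : Fin n} (hb : b ∈ B) : pCov M x b B = 0 := by
  have hcol : (fun q : B => M q b) =
      M.submatrix Subtype.val Subtype.val *ᵥ Pi.single ⟨b, hb⟩ 1 := by
    ext q; simp
  rw [pCov_eq_sub_dotProduct, hcol, dotProduct_mulVec, vecMul_vecMul, nonsing_inv_mul _ hB,
    vecMul_one, dotProduct_single, mul_one, sub_self]

lemma exists_pCov_eq_vecMul (M : Matrix (Fin n) (Fin n) ℝ) (x : Fin n) (B : Finset (Fin n)) :
    ∃ u : B → ℝ, ∀ c,
      pCov M x c B = ((Pi.single x 1 - ∑ q, u q • Pi.single q.1 1) ᵥ* M) c := by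
  refine ⟨(fun q : B => M x q) ᵥ* (M.submatrix Subtype.val Subtype.val)⁻¹, fun c => ?_⟩
  simp [pCov_eq_sub_dotProduct, sub_vecMul, sum_vecMul, smul_vecMul, dotProduct]

/-- `r` is the coefficient vector of the residual of `X_x` after linear regression on `X_B`;
`(r ᵥ* M) c` is then its covariance with `X_c`. -/
def IsPartialResidual (M : Matrix (Fin n) (Fin n) ℝ) (B : Finset (Fin n)) (x : Fin n)
    (r : Fin n → ℝ) : Prop :=
  r x = 1 ∧ (∀ j ∉ insert x B, r j = 0) ∧ ∀ b ∈ B, (r ᵥ* M) b = 0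

lemma exists_isPartialResidual (hM : M.PosDef) (hx : x ∉ B) :
    ∃ r, IsPartialResidual M B x r ∧ ∀ c, pCov M x c B = (r ᵥ* M) c := by
  obtain ⟨u, hu⟩ := exists_pCov_eq_vecMul M x B
  have hB : IsUnit (M.submatrix (Subtype.val : B → Fin n) Subtype.val).det :=
    (hM.submatrix Subtype.val_injective).isUnit.map detMonoidHom
  have hoff : ∀ j ∉ B, (∑ q : B, u q • Pi.single (q : Fin n) (1 : ℝ)) j = 0 := by
    intro j hj
    simp only [Finset.sum_apply, Pi.smul_apply, smul_eq_mul]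
    exact Finset.sum_eq_zero fun q _ => by
      rw [Pi.single_eq_of_ne (ne_of_mem_of_not_mem q.2 hj).symm, mul_zero]
  refine ⟨_, ⟨?_, fun j hj => ?_, fun b hb => ?_⟩, hu⟩
  · rw [Pi.sub_apply, hoff x hx, Pi.single_eq_same, sub_zero]
  · rw [Finset.mem_insert, not_or] at hj
    rw [Pi.sub_apply, hoff j hj.2, Pi.single_eq_of_ne hj.1, sub_zero]
  · rw [← hu, pCov_eq_zero_of_mem hB x hb]

lemma IsPartialResidual.vecMul_dotProduct {r s : Fin n → ℝ} (hr : IsPartialResidual M B x r)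
    (hs : s c = 1) (hs' : ∀ j ∉ insert c B, s j = 0) : (r ᵥ* M) ⬝ᵥ s = (r ᵥ* M) c := by
  rw [dotProduct, Finset.sum_eq_single c, hs, mul_one]
  · intro j _ hjc
    by_cases hj : j ∈ B
    · rw [hr.2.2 j hj, zero_mul]
    · rw [hs' j (by simp [hjc, hj]), mul_zero]
  · simp

lemma IsPartialResidual.unique (hM : M.PosDef) {r r' : Fin n → ℝ}
    (hr : IsPartialResidual M B x r) (hr' : IsPartialResidual M B x r') : r = r' := by
  refine sub_eq_zero.1 (hM.eq_zero_of_vecMul_eq_zero_on (s := ↑B) (fun j hj => ?_) fun b hb => ?_)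
  · by_cases hjx : j = x
    · rw [Pi.sub_apply, hjx, hr.1, hr'.1, sub_self]
    · have hj' : j ∉ insert x B := by simpa [hjx] using hj
      rw [Pi.sub_apply, hr.2.1 j hj', hr'.2.1 j hj', sub_self]
  · rw [sub_vecMul, Pi.sub_apply, hr.2.2 b hb, hr'.2.2 b hb, sub_self]

lemma IsPartialResidual.pCov_eq (hM : M.PosDef) (hx : x ∉ B) {r : Fin n → ℝ}
    (hr : IsPartialResidual M B x r) (c : Fin n) : pCov M x c B = (r ᵥ* M) c := by
  obtain ⟨r₀, hr₀, hpCov⟩ := exists_isPartialResidual hM hx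
  rw [hpCov, hr₀.unique hM hr]

lemma pCov_self_pos (hM : M.PosDef) (hx : x ∉ B) : 0 < pCov M x x B := by
  obtain ⟨r, hr, hpCov⟩ := exists_isPartialResidual hM hx
  have hr0 : r ≠ 0 := fun h => by simpa [h] using hr.1
  have hpos := hM.dotProduct_mulVec_pos hr0
  rwa [star_trivial, dotProduct_mulVec, hr.vecMul_dotProduct hr.1 hr.2.1,
    ← hpCov] at hpos

lemma IsPartialResidual.insert {r s : Fin n → ℝ} (hxa : x ≠ a) (hxB : x ∉ B)
    (hr : IsPartialResidual M B x r) (hs : IsPartialResidual M B a s) (has : (s ᵥ* M) a ≠ 0) :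
    IsPartialResidual M (insert a B) x (r - ((r ᵥ* M) a / (s ᵥ* M) a) • s) := by
  refine ⟨?_, fun j hj => ?_, fun b hb => ?_⟩
  · rw [Pi.sub_apply, Pi.smul_apply, hr.1, hs.2.1 x (by simp [hxa, hxB]), smul_zero, sub_zero]
  · simp only [Finset.mem_insert, not_or] at hj
    rw [Pi.sub_apply, Pi.smul_apply, hr.2.1 j (by simp [hj.1, hj.2.2]),
      hs.2.1 j (by simp [hj.2.1, hj.2.2]), smul_zero, sub_zero]
  rw [sub_vecMul, smul_vecMul, Pi.sub_apply, Pi.smul_apply, smul_eq_mul]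
  rcases Finset.mem_insert.1 hb with rfl | hb
  · rw [div_mul_cancel₀ _ has, sub_self]
  · rw [hr.2.2 b hb, hs.2.2 b hb, mul_zero, sub_zero]

lemma pCov_insert (hM : M.PosDef) (hxa : x ≠ a) (hxB : x ∉ B) (haB : a ∉ B) (c : Fin n) :
    pCov M x c (insert a B) = pCov M x c B - pCov M x a B * pCov M a c B / pCov M a a B := by
  obtain ⟨r, hr, hpCovx⟩ := exists_isPartialResidual hM hxB
  obtain ⟨s, hs, hpCova⟩ := exists_isPartialResidual hM haB
  have has : (s ᵥ* M) a ≠ 0 := hpCova a ▸ (pCov_self_pos hM haB).ne'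
  have hxaB : x ∉ insert a B := by simp [hxa, hxB]
  rw [(hr.insert hxa hxB hs has).pCov_eq hM hxaB, hpCovx, hpCovx, hpCova, hpCova, sub_vecMul,
    smul_vecMul, Pi.sub_apply, Pi.smul_apply, smul_eq_mul]
  ring

lemma pCov_comm (hM : M.IsSymm) (x c : Fin n) (B : Finset (Fin n)) :
    pCov M x c B = pCov M c x B := by
  have hB := ((hM.submatrix (Subtype.val : B → Fin n)).inv).eq
  rw [pCov_eq_sub_dotProduct, pCov_eq_sub_dotProduct, hM.apply c x, ← dotProduct_mulVec,
    ← vecMul_transpose, hB, dotProduct_comm]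
  simp only [hM.apply]

lemma sq_pCov_lt (hM : M.PosDef) (hac : a ≠ c) (haB : a ∉ B) (hcB : c ∉ B) :
    pCov M a c B ^ 2 < pCov M a a B * pCov M c c B := by
  have hcaB : c ∉ insert a B := by simp [hac.symm, hcB]
  have hpos := pCov_self_pos hM hcaB
  have haa := pCov_self_pos hM haB
  rw [pCov_insert hM hac.symm hcB haB, pCov_comm (isHermitian_iff_isSymm.1 hM.1) c a] at hpos
  rw [sub_pos, div_lt_iff₀ haa] at hpos
  linarith

lemma abs_pCor_lt_one (hM : M.PosDef) (hac : a ≠ c) (haB : a ∉ B) (hcB : c ∉ B) :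
    |pCor M a c B| < 1 := by
  have hden : 0 < Real.sqrt (pCov M a a B * pCov M c c B) :=
    Real.sqrt_pos.2 (mul_pos (pCov_self_pos hM haB) (pCov_self_pos hM hcB))
  rw [pCor, abs_div, abs_of_pos hden, div_lt_one hden, ← Real.sqrt_sq_eq_abs]
  exact Real.sqrt_lt_sqrt (sq_nonneg _) (sq_pCov_lt hM hac haB hcB)

lemma pCor_eq_mul_of_pCov_insert_eq_zero (hM : M.PosDef) (hxa : x ≠ a) (hxB : x ∉ B)
    (haB : a ∉ B) (h : pCov M x c (insert a B) = 0) :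
    pCor M x c B = pCor M x a B * pCor M a c B := by
  have hxx := pCov_self_pos hM hxB
  have haa := pCov_self_pos hM haB
  have hcov : pCov M x c B = pCov M x a B * pCov M a c B / pCov M a a B := by
    rwa [pCov_insert hM hxa hxB haB, sub_eq_zero] at h
  have hsqrt : Real.sqrt (pCov M x x B * pCov M a a B) * Real.sqrt (pCov M a a B * pCov M c c B)
      = pCov M a a B * Real.sqrt (pCov M x x B * pCov M c c B) := by
    rw [← Real.sqrt_mul (by positivity),
      show pCov M x x B * pCov M a a B * (pCov M a a B * pCov M c c B)
        = pCov M a a B ^ 2 * (pCov M x x B * pCov M c c B) by ring,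
      Real.sqrt_mul (sq_nonneg _), Real.sqrt_sq haa.le]
  rw [pCor, pCor, pCor, hcov, div_mul_div_comm, hsqrt, div_div]

end CI

open CI in
theorem statement12_general {n : ℕ} (M : Matrix (Fin n) (Fin n) ℝ) (hM : M.PosDef)
    (x a c : Fin n) (hxa : x ≠ a) (hac : a ≠ c)
    (B : Finset (Fin n)) (hxB : x ∉ B) (haB : a ∉ B) (hcB : c ∉ B)
    (h : pCov M x c (insert a B) = 0) :
    pCor M x c B = pCor M x a B * pCor M a c B ∧
      |pCor M x c B| ≤ |pCor M x a B| := by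
  have hfactor := pCor_eq_mul_of_pCov_insert_eq_zero hM hxa hxB haB h
  refine ⟨hfactor, ?_⟩
  rw [hfactor, abs_mul]
  exact mul_le_of_le_one_right (abs_nonneg _) (abs_pCor_lt_one hM hac haB hcB).le

open CI in
/-- vanishing partial covariance given `{a} ∪ B` factors the
partial correlation and bounds it. -/
theorem statement12 {n : ℕ} (M : Matrix (Fin n) (Fin n) ℝ) (hM : M.PosDef)
    (x a c : Fin n) (hxa : x ≠ a) (hxc : x ≠ c) (hac : a ≠ c)
    (B : Finset (Fin n)) (hxB : x ∉ B) (haB : a ∉ B) (hcB : c ∉ B)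
    (h : pCov M x c (insert a B) = 0) :
    pCor M x c B = pCor M x a B * pCor M a c B ∧
      |pCor M x c B| ≤ |pCor M x a B| :=
  statement12_general M hM x a c hxa hac B hxB haB hcB h
end
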